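/- arXiv:1311.1766 — 4 statements merged into one kernel-verified Lean document; each statement's English description precedes it below -/
import Mathlib

section
/- Let (v_j, w_j, u_j), j ∈ ℤ/Nℤ (periodic grid), solve the semi-discrete energy-conservative scheme: (v_j)_t = (1/Δx)(c̄_{j+1/2}w̄_{j+1/2} − c̄_{j−1/2}w̄_{j−1/2}) − (1/(2Δx))(⟦c⟧_{j+1/2}w̄_{j+1/2} + ⟦c⟧_{j−1/2}w̄_{j−1/2}), (w_j)_t = (1/Δx)((c v)̄_{j+1/2} − (c v)̄_{j−1/2}), where c_j = c(u_j). Then the discrete energy (Δx/2)Σ_j (v_j² + w_j²) is constant in time: d/dt[(Δx/2)Σ_j(v_j² + w_j²)] = 0. -/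
open Finset

/-- The semi-discrete energy-conservative scheme conserves the discrete energy. -/
theorem discrete_energy_conservation
    (N : ℕ) [NeZero N] (Δx : ℝ) (hΔx : 0 < Δx)
    (c : ℝ → ℝ) (hc : ContDiff ℝ (⊤ : ℕ∞) c)
    (v w u : ZMod N → ℝ → ℝ)  -- grid index, time
    (hv : ∀ j t, HasDerivAt (v j)
      ((1/Δx) * ((c (u j t) + c (u (j+1) t))/2 * ((w j t + w (j+1) t)/2)
        - (c (u (j-1) t) + c (u j t))/2 * ((w (j-1) t + w j t)/2))
      - (1/(2*Δx)) * ((c (u (j+1) t) - c (u j t)) * ((w j t + w (j+1) t)/2)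
        + (c (u j t) - c (u (j-1) t)) * ((w (j-1) t + w j t)/2))) t)
    (hw : ∀ j t, HasDerivAt (w j)
      ((1/Δx) * ((c (u j t) * v j t + c (u (j+1) t) * v (j+1) t)/2
        - (c (u (j-1) t) * v (j-1) t + c (u j t) * v j t)/2)) t)
    (hu : ∀ j t, HasDerivAt (u j) (v j t) t) :
    ∀ t : ℝ, HasDerivAt
      (fun s => Δx/2 * ∑ j : ZMod N, (v j s ^ 2 + w j s ^ 2)) 0 t := by
  intro t
  -- derivative of each summand
  set D : ZMod N → ℝ := fun j =>
      ((1/Δx) * ((c (u j t) + c (u (j+1) t))/2 * ((w j t + w (j+1) t)/2)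
        - (c (u (j-1) t) + c (u j t))/2 * ((w (j-1) t + w j t)/2))
      - (1/(2*Δx)) * ((c (u (j+1) t) - c (u j t)) * ((w j t + w (j+1) t)/2)
        + (c (u j t) - c (u (j-1) t)) * ((w (j-1) t + w j t)/2))) with hD
  set E : ZMod N → ℝ := fun j =>
      ((1/Δx) * ((c (u j t) * v j t + c (u (j+1) t) * v (j+1) t)/2
        - (c (u (j-1) t) * v (j-1) t + c (u j t) * v j t)/2)) with hE
  have hsum : HasDerivAt (fun s => ∑ j : ZMod N, (v j s ^ 2 + w j s ^ 2))
      (∑ j : ZMod N, ((2:ℝ) * v j t ^ 1 * D j + (2:ℝ) * w j t ^ 1 * E j)) t :=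
    HasDerivAt.fun_sum fun j _ => ((hv j t).pow 2).add ((hw j t).pow 2)
  have hmain := hsum.const_mul (Δx/2)
  -- the telescoping function
  set F : ZMod N → ℝ := fun j =>
      c (u j t) * v j t * w (j+1) t + c (u (j+1) t) * v (j+1) t * w j t with hF
  have hterm : ∀ j : ZMod N,
      (2:ℝ) * v j t ^ 1 * D j + (2:ℝ) * w j t ^ 1 * E j
        = (1/Δx) * F j - (1/Δx) * F (j-1) := by
    intro j
    simp only [hD, hE, hF, pow_one, sub_add_cancel]
    field_simp
    ring
  have hzero : (∑ j : ZMod N, ((2:ℝ) * v j t ^ 1 * D j + (2:ℝ) * w j t ^ 1 * E j)) = 0 := by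
    rw [Finset.sum_congr rfl fun j _ => hterm j, Finset.sum_sub_distrib]
    have : (∑ j : ZMod N, (1/Δx) * F (j-1)) = ∑ j : ZMod N, (1/Δx) * F j :=
      Fintype.sum_equiv (Equiv.subRight (1 : ZMod N)) _ _ (fun j => rfl)
    rw [this, sub_self]
  rw [hzero, mul_zero] at hmain
  exact hmain
end

section
/- Let (v_j, w_j, u_j), j ∈ ℤ/Nℤ, solve the semi-discrete energy-dissipative scheme obtained by adding to the conservative scheme the viscosity terms (1/(2Δx))(s_{j+1/2}⟦v⟧_{j+1/2} − s_{j−1/2}⟦v⟧_{j−1/2}) in the v-equation and (1/(2Δx))(s_{j+1/2}⟦w⟧_{j+1/2} − s_{j−1/2}⟦w⟧_{j−1/2}) in the w-equation, where s_{j+1/2} = max{c(u_j), c(u_{j+1})} and c > 0. Then d/dt[(Δx/2)Σ_j(v_j² + w_j²)] = −(1/2)Σ_j s_{j+1/2}(⟦v⟧²_{j+1/2} + ⟦w⟧²_{j+1/2}) ≤ 0. -/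
open Finset

/-- The semi-discrete energy-dissipative scheme dissipates the discrete energy
at the stated rate. -/
theorem discrete_energy_dissipation
    (N : ℕ) [NeZero N] (Δx : ℝ) (hΔx : 0 < Δx)
    (c : ℝ → ℝ) (hc : ContDiff ℝ (⊤ : ℕ∞) c) (hcpos : ∀ z, 0 < c z)
    (v w u : ZMod N → ℝ → ℝ)  -- grid index, time
    (s : ZMod N → ℝ → ℝ)
    (hs : ∀ j t, s j t = max (c (u j t)) (c (u (j+1) t)))  -- s_{j+1/2}
    (hv : ∀ j t, HasDerivAt (v j)
      ((1/Δx) * ((c (u j t) + c (u (j+1) t))/2 * ((w j t + w (j+1) t)/2)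
        - (c (u (j-1) t) + c (u j t))/2 * ((w (j-1) t + w j t)/2))
      - (1/(2*Δx)) * ((c (u (j+1) t) - c (u j t)) * ((w j t + w (j+1) t)/2)
        + (c (u j t) - c (u (j-1) t)) * ((w (j-1) t + w j t)/2))
      + (1/(2*Δx)) * (s j t * (v (j+1) t - v j t) - s (j-1) t * (v j t - v (j-1) t))) t)
    (hw : ∀ j t, HasDerivAt (w j)
      ((1/Δx) * ((c (u j t) * v j t + c (u (j+1) t) * v (j+1) t)/2
        - (c (u (j-1) t) * v (j-1) t + c (u j t) * v j t)/2)
      + (1/(2*Δx)) * (s j t * (w (j+1) t - w j t) - s (j-1) t * (w j t - w (j-1) t))) t)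
    (hu : ∀ j t, HasDerivAt (u j) (v j t) t) :
    (∀ t : ℝ, HasDerivAt
      (fun τ => Δx/2 * ∑ j : ZMod N, (v j τ ^ 2 + w j τ ^ 2))
      (-(1/2) * ∑ j : ZMod N, s j t * ((v (j+1) t - v j t)^2 + (w (j+1) t - w j t)^2)) t)
    ∧ ∀ t : ℝ,
      -(1/2) * ∑ j : ZMod N, s j t * ((v (j+1) t - v j t)^2 + (w (j+1) t - w j t)^2) ≤ 0 := by
  have hne : Δx ≠ 0 := ne_of_gt hΔx
  constructor
  · intro t
    have sq : ∀ (f : ℝ → ℝ) (f' x : ℝ), HasDerivAt f f' x →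
        HasDerivAt (fun τ => f τ ^ 2) (2 * f x * f') x := by
      intro f f' x h
      simpa using h.fun_pow 2
    have hsum : HasDerivAt (fun τ => ∑ j : ZMod N, (v j τ ^ 2 + w j τ ^ 2))
        (∑ j : ZMod N,
          (2 * v j t * ((1/Δx) * ((c (u j t) + c (u (j+1) t))/2 * ((w j t + w (j+1) t)/2)
              - (c (u (j-1) t) + c (u j t))/2 * ((w (j-1) t + w j t)/2))
            - (1/(2*Δx)) * ((c (u (j+1) t) - c (u j t)) * ((w j t + w (j+1) t)/2)
              + (c (u j t) - c (u (j-1) t)) * ((w (j-1) t + w j t)/2))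
            + (1/(2*Δx)) * (s j t * (v (j+1) t - v j t) - s (j-1) t * (v j t - v (j-1) t)))
          + 2 * w j t * ((1/Δx) * ((c (u j t) * v j t + c (u (j+1) t) * v (j+1) t)/2
              - (c (u (j-1) t) * v (j-1) t + c (u j t) * v j t)/2)
            + (1/(2*Δx)) * (s j t * (w (j+1) t - w j t) - s (j-1) t * (w j t - w (j-1) t))))) t :=
      HasDerivAt.fun_sum (fun j _ => ((sq _ _ _ (hv j t)).add (sq _ _ _ (hw j t))))
    have H := HasDerivAt.const_mul (Δx/2) hsum
    convert H using 1
    · rfl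
    · rfl
    -- sum equality
    set T : ZMod N → ℝ := fun j =>
      (c (u j t) * v j t * w (j+1) t + c (u (j+1) t) * v (j+1) t * w j t)/2
      + s j t * v (j+1) t * (v (j+1) t - v j t) / 2
      + s j t * w (j+1) t * (w (j+1) t - w j t) / 2 with hT
    have shift : ∀ f : ZMod N → ℝ, ∑ j : ZMod N, f (j + 1) = ∑ j : ZMod N, f j := by
      intro f
      exact Fintype.sum_equiv (Equiv.addRight 1) _ _ (fun j => rfl)
    have shift' : ∑ j : ZMod N, T (j - 1) = ∑ j : ZMod N, T j := by
      have := shift (fun j => T (j - 1))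
      simpa using this.symm
    have key : ∀ j : ZMod N,
        Δx/2 * (2 * v j t * ((1/Δx) * ((c (u j t) + c (u (j+1) t))/2 * ((w j t + w (j+1) t)/2)
              - (c (u (j-1) t) + c (u j t))/2 * ((w (j-1) t + w j t)/2))
            - (1/(2*Δx)) * ((c (u (j+1) t) - c (u j t)) * ((w j t + w (j+1) t)/2)
              + (c (u j t) - c (u (j-1) t)) * ((w (j-1) t + w j t)/2))
            + (1/(2*Δx)) * (s j t * (v (j+1) t - v j t) - s (j-1) t * (v j t - v (j-1) t)))
          + 2 * w j t * ((1/Δx) * ((c (u j t) * v j t + c (u (j+1) t) * v (j+1) t)/2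
              - (c (u (j-1) t) * v (j-1) t + c (u j t) * v j t)/2)
            + (1/(2*Δx)) * (s j t * (w (j+1) t - w j t) - s (j-1) t * (w j t - w (j-1) t))))
        + 1/2 * (s j t * ((v (j+1) t - v j t)^2 + (w (j+1) t - w j t)^2))
        = T j - T (j - 1) := by
      intro j
      rw [hT]
      field_simp
      ring
    have h0 : Δx/2 * (∑ j : ZMod N,
          (2 * v j t * ((1/Δx) * ((c (u j t) + c (u (j+1) t))/2 * ((w j t + w (j+1) t)/2)
              - (c (u (j-1) t) + c (u j t))/2 * ((w (j-1) t + w j t)/2))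
            - (1/(2*Δx)) * ((c (u (j+1) t) - c (u j t)) * ((w j t + w (j+1) t)/2)
              + (c (u j t) - c (u (j-1) t)) * ((w (j-1) t + w j t)/2))
            + (1/(2*Δx)) * (s j t * (v (j+1) t - v j t) - s (j-1) t * (v j t - v (j-1) t)))
          + 2 * w j t * ((1/Δx) * ((c (u j t) * v j t + c (u (j+1) t) * v (j+1) t)/2
              - (c (u (j-1) t) * v (j-1) t + c (u j t) * v j t)/2)
            + (1/(2*Δx)) * (s j t * (w (j+1) t - w j t) - s (j-1) t * (w j t - w (j-1) t)))))
        + 1/2 * ∑ j : ZMod N, s j t * ((v (j+1) t - v j t)^2 + (w (j+1) t - w j t)^2) = 0 := by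
      rw [Finset.mul_sum, Finset.mul_sum, ← Finset.sum_add_distrib,
        Finset.sum_congr rfl (fun j _ => key j), Finset.sum_sub_distrib, shift']
      ring
    linarith [h0]
  · intro t
    have hnn : 0 ≤ ∑ j : ZMod N, s j t * ((v (j+1) t - v j t)^2 + (w (j+1) t - w j t)^2) := by
      refine Finset.sum_nonneg fun j _ => mul_nonneg ?_ (by positivity)
      rw [hs]
      exact le_trans (hcpos _).le (le_max_left _ _)
    linarith
end

section
/- Let (R_j, S_j, u_j), j ∈ ℤ/Nℤ, solve the semi-discrete Riemann-invariant scheme: (R_j)_t = (1/Δx)(c̄_{j+1/2}R̄_{j+1/2} − c̄_{j−1/2}R̄_{j−1/2}) − (R_j/(4Δx))(⟦c⟧_{j+1/2}+⟦c⟧_{j−1/2}) + (S_j/(4Δx))(⟦c⟧_{j+1/2}+⟦c⟧_{j−1/2}), (S_j)_t = −(1/Δx)(c̄_{j+1/2}S̄_{j+1/2} − c̄_{j−1/2}S̄_{j−1/2}) − (R_j/(4Δx))(⟦c⟧_{j+1/2}+⟦c⟧_{j−1/2}) + (S_j/(4Δx))(⟦c⟧_{j+1/2}+⟦c⟧_{j−1/2}),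 with c_j = c(u_j) and (u_j)_t = (R_j+S_j)/2. Then d/dt[(Δx/2)Σ_j(R_j² + S_j²)] = 0. -/
open Finset

private lemma shift_sum {N : ℕ} [NeZero N] (g : ZMod N → ℝ) :
    ∑ j : ZMod N, g (j + 1) = ∑ j : ZMod N, g j :=
  Fintype.sum_equiv (Equiv.addRight 1) _ _ fun _ => rfl

private lemma shift_sum' {N : ℕ} [NeZero N] (g : ZMod N → ℝ) :
    ∑ j : ZMod N, g (j - 1) = ∑ j : ZMod N, g j :=
  Fintype.sum_equiv (Equiv.subRight 1) _ _ fun _ => rfl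

private lemma sum_zero_aux {N : ℕ} [NeZero N] (Δx : ℝ) (hΔx : Δx ≠ 0)
    (r s cc : ZMod N → ℝ) :
    ∑ j : ZMod N,
      (2 * r j * ((1/Δx) * ((cc j + cc (j+1))/2 * ((r j + r (j+1))/2)
          - (cc (j-1) + cc j)/2 * ((r (j-1) + r j)/2))
        - (r j/(4*Δx)) * ((cc (j+1) - cc j) + (cc j - cc (j-1)))
        + (s j/(4*Δx)) * ((cc (j+1) - cc j) + (cc j - cc (j-1))))
      + 2 * s j * (-(1/Δx) * ((cc j + cc (j+1))/2 * ((s j + s (j+1))/2)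
          - (cc (j-1) + cc j)/2 * ((s (j-1) + s j)/2))
        - (r j/(4*Δx)) * ((cc (j+1) - cc j) + (cc j - cc (j-1)))
        + (s j/(4*Δx)) * ((cc (j+1) - cc j) + (cc j - cc (j-1))))) = 0 := by
  set P : ZMod N → ℝ := fun j =>
    2 * r j * ((cc j + cc (j+1))/2 * ((r j + r (j+1))/2))
    - 2 * s j * ((cc j + cc (j+1))/2 * ((s j + s (j+1))/2))
    + (s j^2 - r j^2) * (cc (j+1) - cc j)/2 with hP
  set M : ZMod N → ℝ := fun j =>
    - 2 * r (j+1) * ((cc j + cc (j+1))/2 * ((r j + r (j+1))/2))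
    + 2 * s (j+1) * ((cc j + cc (j+1))/2 * ((s j + s (j+1))/2))
    + (s (j+1)^2 - r (j+1)^2) * (cc (j+1) - cc j)/2 with hM
  set f : ZMod N → ℝ := fun j => cc j * s j ^ 2 - cc j * r j ^ 2 with hf
  calc
    _ = ∑ j : ZMod N, (P j + M (j-1)) / Δx := by
        refine Finset.sum_congr rfl fun j _ => ?_
        have h1 : (j : ZMod N) - 1 + 1 = j := sub_add_cancel j 1
        simp only [hP, hM, h1]
        field_simp
        ring
    _ = (∑ j : ZMod N, P j + ∑ j : ZMod N, M (j-1)) / Δx := by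
        rw [← Finset.sum_div]
        exact congrArg (· / Δx) Finset.sum_add_distrib
    _ = (∑ j : ZMod N, (P j + M j)) / Δx := by
        rw [shift_sum' M]
        exact congrArg (· / Δx) Finset.sum_add_distrib.symm
    _ = (∑ j : ZMod N, (f (j+1) - f j)) / Δx := by
        refine congrArg (· / Δx) (Finset.sum_congr rfl fun j _ => ?_)
        simp only [hP, hM, hf]
        ring
    _ = ((∑ j : ZMod N, f (j+1)) - ∑ j : ZMod N, f j) / Δx :=
        congrArg (· / Δx) (Finset.sum_sub_distrib _ _)
    _ = 0 := by
        rw [shift_sum f, sub_self, zero_div]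

/-- The semi-discrete Riemann-invariant scheme conserves the discrete energy. -/
theorem discrete_energy_conservation_riemann
    (N : ℕ) [NeZero N] (Δx : ℝ) (hΔx : 0 < Δx)
    (c : ℝ → ℝ) (hc : ContDiff ℝ (⊤ : ℕ∞) c)
    (R S u : ZMod N → ℝ → ℝ)  -- grid index, time
    (hR : ∀ j t, HasDerivAt (R j)
      ((1/Δx) * ((c (u j t) + c (u (j+1) t))/2 * ((R j t + R (j+1) t)/2)
        - (c (u (j-1) t) + c (u j t))/2 * ((R (j-1) t + R j t)/2))
      - (R j t/(4*Δx)) * ((c (u (j+1) t) - c (u j t)) + (c (u j t) - c (u (j-1) t)))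
      + (S j t/(4*Δx)) * ((c (u (j+1) t) - c (u j t)) + (c (u j t) - c (u (j-1) t)))) t)
    (hS : ∀ j t, HasDerivAt (S j)
      (-(1/Δx) * ((c (u j t) + c (u (j+1) t))/2 * ((S j t + S (j+1) t)/2)
        - (c (u (j-1) t) + c (u j t))/2 * ((S (j-1) t + S j t)/2))
      - (R j t/(4*Δx)) * ((c (u (j+1) t) - c (u j t)) + (c (u j t) - c (u (j-1) t)))
      + (S j t/(4*Δx)) * ((c (u (j+1) t) - c (u j t)) + (c (u j t) - c (u (j-1) t)))) t)
    (hu : ∀ j t, HasDerivAt (u j) ((R j t + S j t)/2) t) :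
    ∀ t : ℝ, HasDerivAt
      (fun s => Δx/2 * ∑ j : ZMod N, (R j s ^ 2 + S j s ^ 2)) 0 t := by
  intro t
  have key : ∀ j : ZMod N, HasDerivAt (fun s => R j s ^ 2 + S j s ^ 2)
      (2 * R j t * ((1/Δx) * ((c (u j t) + c (u (j+1) t))/2 * ((R j t + R (j+1) t)/2)
          - (c (u (j-1) t) + c (u j t))/2 * ((R (j-1) t + R j t)/2))
        - (R j t/(4*Δx)) * ((c (u (j+1) t) - c (u j t)) + (c (u j t) - c (u (j-1) t)))
        + (S j t/(4*Δx)) * ((c (u (j+1) t) - c (u j t)) + (c (u j t) - c (u (j-1) t))))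
      + 2 * S j t * (-(1/Δx) * ((c (u j t) + c (u (j+1) t))/2 * ((S j t + S (j+1) t)/2)
          - (c (u (j-1) t) + c (u j t))/2 * ((S (j-1) t + S j t)/2))
        - (R j t/(4*Δx)) * ((c (u (j+1) t) - c (u j t)) + (c (u j t) - c (u (j-1) t)))
        + (S j t/(4*Δx)) * ((c (u (j+1) t) - c (u j t)) + (c (u j t) - c (u (j-1) t))))) t := by
    intro j
    have h := ((hR j t).fun_pow 2).fun_add ((hS j t).fun_pow 2)
    refine h.congr_deriv ?_
    push_cast
    ring
  have hsum := (HasDerivAt.fun_sum (fun j (_ : j ∈ Finset.univ) => key j)).const_mul (Δx/2)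
  have hzero := sum_zero_aux Δx (ne_of_gt hΔx) (fun j => R j t) (fun j => S j t)
    (fun j => c (u j t))
  rw [hzero, mul_zero] at hsum
  exact hsum
end

section
/- Let u_j, j ∈ ℤ/Nℤ, solve the Hamiltonian-based semi-discrete scheme (u_j)_tt + c(u_j)c'(u_j)(D⁰u_j)² − D⁰(c(u_j)²D⁰u_j) = 0, where D⁰z_j = (z_{j+1} − z_{j−1})/(2Δx). Then the discrete energy (Δx/2)Σ_j[((u_j)_t)² + c(u_j)²(D⁰u_j)²] is constant in time. -/
/-!
Along a solution, the time derivative of the energy is `Δx Σ_j (v_j D⁰F_j + F_j D⁰v_j)`, where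
`v_j = (u_j)_t` and `F_j = c(u_j)² D⁰u_j`: the term `c c' (D⁰u)²` of the scheme cancels the one
coming from differentiating `c(u_j)²`. On the periodic grid `D⁰` is skew-adjoint (summation by
parts), so this sum vanishes.
-/

open Finset

noncomputable section

variable {G : Type*} [AddGroup G] [One G] (Δx : ℝ)

def centralDiff (z : G → ℝ) (j : G) : ℝ :=
  (z (j + 1) - z (j - 1)) / (2 * Δx)

def discreteEnergy (c : ℝ → ℝ) [Fintype G] (u v : G → ℝ) : ℝ :=
  Δx / 2 * ∑ j, (v j ^ 2 + c (u j) ^ 2 * centralDiff Δx u j ^ 2)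

theorem sum_mul_centralDiff [Fintype G] (f g : G → ℝ) :
    ∑ j, f j * centralDiff Δx g j = -∑ j, g j * centralDiff Δx f j := by
  have shift_add : ∑ j, f j * g (j + 1) = ∑ j, g j * f (j - 1) :=
    Fintype.sum_equiv (Equiv.addRight 1) _ _ fun j => by simp [mul_comm]
  have shift_sub : ∑ j, f j * g (j - 1) = ∑ j, g j * f (j + 1) :=
    Fintype.sum_equiv (Equiv.subRight 1) _ _ fun j => by simp [mul_comm]
  simp only [centralDiff, mul_div_assoc', ← sum_div, mul_sub, sum_sub_distrib,
    shift_add, shift_sub]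
  ring

theorem hasDerivAt_centralDiff {u v : G → ℝ → ℝ} {t : ℝ} (hu : ∀ j, HasDerivAt (u j) (v j t) t)
    (j : G) :
    HasDerivAt (fun s => centralDiff Δx (fun i => u i s) j) (centralDiff Δx (fun i => v i t) j) t :=
  ((hu (j + 1)).sub (hu (j - 1))).div_const _

theorem hasDerivAt_discreteEnergy [Fintype G] {c : ℝ → ℝ} (hc : Differentiable ℝ c)
    {u v : G → ℝ → ℝ} {a : G → ℝ} {t : ℝ} (hu : ∀ j, HasDerivAt (u j) (v j t) t)
    (hv : ∀ j, HasDerivAt (v j) (a j) t) :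
    HasDerivAt (fun s => discreteEnergy Δx c (fun j => u j s) (fun j => v j s))
      (Δx * ∑ j, (v j t * (a j + c (u j t) * deriv c (u j t) * centralDiff Δx (fun i => u i t) j ^ 2)
        + c (u j t) ^ 2 * centralDiff Δx (fun i => u i t) j * centralDiff Δx (fun i => v i t) j)) t := by
  have hsite : ∀ j, HasDerivAt
      (fun s => v j s ^ 2 + c (u j s) ^ 2 * centralDiff Δx (fun i => u i s) j ^ 2)
      (2 * (v j t * (a j + c (u j t) * deriv c (u j t) * centralDiff Δx (fun i => u i t) j ^ 2)
        + c (u j t) ^ 2 * centralDiff Δx (fun i => u i t) j * centralDiff Δx (fun i => v i t) j)) t := by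
    intro j
    have hcu := ((hc (u j t)).hasDerivAt.comp t (hu j)).fun_pow 2
    refine (((hv j).fun_pow 2).fun_add
      (hcu.fun_mul ((hasDerivAt_centralDiff Δx hu j).fun_pow 2))).congr_deriv ?_
    simp only [Function.comp_apply]
    ring
  refine ((HasDerivAt.fun_sum fun j _ => hsite j).const_mul (Δx / 2)).congr_deriv ?_
  rw [← mul_sum]
  ring

end

theorem discrete_energy_conservation_hamiltonian_general
    (N : ℕ) [NeZero N] (Δx : ℝ)
    (c : ℝ → ℝ) (hc : ContDiff ℝ 1 c)
    (u ut : ZMod N → ℝ → ℝ)  -- grid index, time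
    (hut : ∀ j t, HasDerivAt (u j) (ut j t) t)
    (hscheme : ∀ j t, HasDerivAt (ut j)
      (-(c (u j t) * deriv c (u j t) * ((u (j+1) t - u (j-1) t)/(2*Δx)) ^ 2)
       + ((c (u (j+1) t) ^ 2 * ((u (j+1+1) t - u j t)/(2*Δx)))
          - (c (u (j-1) t) ^ 2 * ((u j t - u (j-1-1) t)/(2*Δx)))) / (2*Δx)) t) :
    ∀ t : ℝ, HasDerivAt
      (fun s => Δx/2 * ∑ j : ZMod N,
        (ut j s ^ 2 + c (u j s) ^ 2 * ((u (j+1) s - u (j-1) s)/(2*Δx)) ^ 2)) 0 t := by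
  intro t
  set F : ZMod N → ℝ := fun j => c (u j t) ^ 2 * centralDiff Δx (fun i => u i t) j
  have hacc : ∀ j, HasDerivAt (ut j)
      (-(c (u j t) * deriv c (u j t) * centralDiff Δx (fun i => u i t) j ^ 2)
        + centralDiff Δx F j) t := by
    intro j
    simpa only [F, centralDiff, add_sub_cancel_right, sub_add_cancel] using hscheme j t
  have henergy := hasDerivAt_discreteEnergy Δx (hc.differentiable one_ne_zero) (hut · t) hacc
  simp only [neg_add_cancel_comm] at henergy
  rwa [sum_add_distrib, sum_mul_centralDiff, neg_add_cancel, mul_zero] at henergy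

/-- The Hamiltonian-based semi-discrete scheme
`(u_j)_tt + c(u_j)c'(u_j)(D⁰u_j)² − D⁰(c(u_j)² D⁰u_j) = 0`, with
`D⁰z_j = (z_{j+1} − z_{j−1})/(2Δx)`, conserves the discrete energy
`(Δx/2) Σ_j [((u_j)_t)² + c(u_j)² (D⁰u_j)²]`. -/
theorem discrete_energy_conservation_hamiltonian
    (N : ℕ) [NeZero N] (Δx : ℝ) (hΔx : 0 < Δx)
    (c : ℝ → ℝ) (hc : ContDiff ℝ 1 c)
    (u ut : ZMod N → ℝ → ℝ)  -- grid index, time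
    (hut : ∀ j t, HasDerivAt (u j) (ut j t) t)
    (hscheme : ∀ j t, HasDerivAt (ut j)
      (-(c (u j t) * deriv c (u j t) * ((u (j+1) t - u (j-1) t)/(2*Δx)) ^ 2)
       + ((c (u (j+1) t) ^ 2 * ((u (j+1+1) t - u j t)/(2*Δx)))
          - (c (u (j-1) t) ^ 2 * ((u j t - u (j-1-1) t)/(2*Δx)))) / (2*Δx)) t) :
    ∀ t : ℝ, HasDerivAt
      (fun s => Δx/2 * ∑ j : ZMod N,
        (ut j s ^ 2 + c (u j s) ^ 2 * ((u (j+1) s - u (j-1) s)/(2*Δx)) ^ 2)) 0 t :=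
  discrete_energy_conservation_hamiltonian_general N Δx c hc u ut hut hscheme
end
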